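/- arXiv:1710.07148 — 7 statements merged into one kernel-verified Lean document; each statement's English description precedes it below -/
import Mathlib

section
/- Let F be a forest (a finite simple acyclic graph) whose maximum induced matching has size at most p, where p is a positive integer. Then the number of vertices of F that are neither isolated vertices nor leaves (i.e., vertices of degree at least 2) is at most 6p. -/
set_option linter.unusedSectionVars false

open SimpleGraph Finset

section Forest

variable {V : Type*} [Fintype V] [DecidableEq V]
variable (F : SimpleGraph V) [DecidableRel F.Adj]

/-- internal vertices within a subset -/
def FRint (S : Finset V) : Finset V := S.filter (fun v => 2 ≤ (S.filter (F.Adj v)).card)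

/-- induced matching with endpoints in S -/
def FRim (S : Finset V) (k : ℕ) (a b : Fin k → V) : Prop :=
  (∀ i, a i ∈ S ∧ b i ∈ S ∧ F.Adj (a i) (b i)) ∧
  ∀ i j, i ≠ j → a i ≠ a j ∧ b i ≠ b j ∧ a i ≠ b j ∧
    ¬ F.Adj (a i) (a j) ∧ ¬ F.Adj (b i) (b j) ∧ ¬ F.Adj (a i) (b j)

variable {F}

lemma FRint_mem {S : Finset V} {v : V} (h : v ∈ FRint F S) :
    v ∈ S ∧ 2 ≤ (S.filter (F.Adj v)).card := by
  simpa [FRint] using h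

lemma FRint_of {S : Finset V} {v : V} (h1 : v ∈ S)
    (h2 : 2 ≤ (S.filter (F.Adj v)).card) : v ∈ FRint F S := by
  simp [FRint, h1, h2]

/-- a vertex keeping all its S-neighbors outside D stays internal -/
lemma FRint_stable {S D : Finset V} {x : V} (hx : x ∈ FRint F S)
    (hxD : x ∉ D) (hnb : ∀ y ∈ S, F.Adj x y → y ∉ D) :
    x ∈ FRint F (S \ D) := by
  obtain ⟨hxS, hdeg⟩ := FRint_mem hx
  refine FRint_of (by simp [hxS, hxD]) (le_trans hdeg (Finset.card_le_card ?_))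
  intro y hy
  simp only [Finset.mem_filter, Finset.mem_sdiff] at hy ⊢
  exact ⟨⟨hy.1, hnb y hy.1 hy.2⟩, hy.2⟩

lemma fin_add_cases' {t k : ℕ} (i : Fin (t + k)) :
    (∃ i' : Fin t, i = Fin.castAdd k i') ∨ (∃ i' : Fin k, i = Fin.natAdd t i') := by
  rcases lt_or_ge (i : ℕ) t with h | h
  · exact Or.inl ⟨⟨i, h⟩, by ext; simp⟩
  · exact Or.inr ⟨⟨(i : ℕ) - t, by omega⟩, by ext; simp; omega⟩

lemma FRim_combine {S D : Finset V} {t k : ℕ}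
    {a1 b1 : Fin t → V} {a2 b2 : Fin k → V}
    (h1 : FRim F S t a1 b1)
    (hD : ∀ i, a1 i ∈ D ∧ b1 i ∈ D)
    (hsep : ∀ i, ∀ x ∈ S \ D, ¬ F.Adj x (a1 i) ∧ ¬ F.Adj x (b1 i))
    (h2 : FRim F (S \ D) k a2 b2) :
    FRim F S (t + k) (Fin.append a1 a2) (Fin.append b1 b2) := by
  have hmem2 : ∀ i, a2 i ∈ S \ D ∧ b2 i ∈ S \ D ∧ F.Adj (a2 i) (b2 i) := h2.1
  constructor
  · intro i
    rcases fin_add_cases' i with ⟨i', rfl⟩ | ⟨i', rfl⟩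
    · simpa [Fin.append_left] using (h1.1 i')
    · have := hmem2 i'
      simp only [Fin.append_right]
      exact ⟨Finset.sdiff_subset this.1, Finset.sdiff_subset this.2.1, this.2.2⟩
  · intro i j hij
    rcases fin_add_cases' i with ⟨i', rfl⟩ | ⟨i', rfl⟩ <;>
      rcases fin_add_cases' j with ⟨j', rfl⟩ | ⟨j', rfl⟩ <;>
        simp only [Fin.append_left, Fin.append_right]
    · exact h1.2 i' j' (fun h => hij (by rw [h]))
    · have hja := (hmem2 j').1
      have hjb := (hmem2 j').2.1
      refine ⟨?_, ?_, ?_, ?_, ?_, ?_⟩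
      · intro h; rw [← h] at hja; exact (Finset.mem_sdiff.1 hja).2 (hD i').1
      · intro h; rw [← h] at hjb; exact (Finset.mem_sdiff.1 hjb).2 (hD i').2
      · intro h; rw [← h] at hjb; exact (Finset.mem_sdiff.1 hjb).2 (hD i').1
      · exact fun h => (hsep i' (a2 j') hja).1 h.symm
      · exact fun h => (hsep i' (b2 j') hjb).2 h.symm
      · exact fun h => (hsep i' (b2 j') hjb).1 h.symm
    · have hia := (hmem2 i').1
      have hib := (hmem2 i').2.1
      refine ⟨?_, ?_, ?_, ?_, ?_, ?_⟩
      · intro h; rw [h] at hia; exact (Finset.mem_sdiff.1 hia).2 (hD j').1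
      · intro h; rw [h] at hib; exact (Finset.mem_sdiff.1 hib).2 (hD j').2
      · intro h; rw [h] at hia; exact (Finset.mem_sdiff.1 hia).2 (hD j').2
      · exact (hsep j' (a2 i') hia).1
      · exact (hsep j' (b2 i') hib).2
      · exact (hsep j' (a2 i') hia).2
    · exact h2.2 i' j' (fun h => hij (by rw [h]))

/-- wrap-up step for the induction -/
lemma FRfinish {n : ℕ} {S D : Finset V} {t : ℕ} {a1 b1 : Fin t → V}
    (hsub : D ⊆ S) (hne : D.Nonempty)
    (h1 : FRim F S t a1 b1)
    (hD : ∀ i, a1 i ∈ D ∧ b1 i ∈ D)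
    (hsep : ∀ i, ∀ x ∈ S \ D, ¬ F.Adj x (a1 i) ∧ ¬ F.Adj x (b1 i))
    (hdrop : (FRint F S).card ≤ (FRint F (S \ D)).card + 6 * t)
    (ih : ∀ S' : Finset V, S'.card ≤ n →
      ∃ (k : ℕ) (a b : Fin k → V), FRim F S' k a b ∧ (FRint F S').card ≤ 6 * k)
    (hS : S.card ≤ n + 1) :
    ∃ (k : ℕ) (a b : Fin k → V), FRim F S k a b ∧ (FRint F S).card ≤ 6 * k := by
  have hss : S \ D ⊂ S := Finset.sdiff_ssubset hsub hne
  have hcard : (S \ D).card ≤ n := by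
    have := Finset.card_lt_card hss
    omega
  obtain ⟨k, a2, b2, h2, hb⟩ := ih _ hcard
  refine ⟨t + k, _, _, FRim_combine h1 hD hsep h2, ?_⟩
  have : 6 * (t + k) = 6 * k + 6 * t := by ring
  omega

lemma walk_getVert_one_mem_support {a b : V} (q : F.Walk a b) :
    q.getVert 1 ∈ q.support := by
  cases q with
  | nil => simp [SimpleGraph.Walk.getVert]
  | cons h r =>
    rw [SimpleGraph.Walk.getVert_cons_succ, SimpleGraph.Walk.getVert_zero,
      SimpleGraph.Walk.support_cons]
    exact List.mem_cons_of_mem _ r.start_mem_support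

lemma walk_edge_fst {a b c : V} (p : F.Walk a b) (hp : p.IsPath)
    (he : s(a, c) ∈ p.edges) : c = p.getVert 1 := by
  cases p with
  | nil => simp at he
  | cons h r =>
    rw [SimpleGraph.Walk.edges_cons] at he
    rcases List.mem_cons.1 he with he | he
    · rw [Sym2.eq_iff] at he
      rcases he with ⟨-, rfl⟩ | ⟨h1, -⟩
      · rw [SimpleGraph.Walk.getVert_cons_succ, SimpleGraph.Walk.getVert_zero]
      · exact absurd h1 h.ne
    · have := SimpleGraph.Walk.fst_mem_support_of_mem_edges r he
      rw [SimpleGraph.Walk.cons_isPath_iff] at hp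
      exact absurd this hp.2

lemma FRmain (hF : F.IsAcyclic) :
    ∀ (n : ℕ) (S : Finset V), S.card ≤ n →
      ∃ (k : ℕ) (a b : Fin k → V), FRim F S k a b ∧ (FRint F S).card ≤ 6 * k := by
  intro n
  induction n with
  | zero =>
    intro S hS
    refine ⟨0, Fin.elim0, Fin.elim0, ⟨fun i => i.elim0, fun i => i.elim0⟩, ?_⟩
    have : S = ∅ := Finset.card_eq_zero.1 (Nat.le_zero.1 hS)
    subst this
    simp [FRint]
  | succ n ih =>
    intro S hS
    by_cases hIe : (FRint F S) = ∅
    · exact ⟨0, Fin.elim0, Fin.elim0, ⟨fun i => i.elim0, fun i => i.elim0⟩, by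
        rw [hIe]; simp⟩
    obtain ⟨v, hv⟩ := Finset.nonempty_iff_ne_empty.2 hIe
    by_cases hJ : ∀ x ∈ FRint F S, ∀ y ∈ FRint F S, ¬ F.Adj x y
    · -- STEP A : no two internal vertices are adjacent
      obtain ⟨hvS, hvdeg⟩ := FRint_mem hv
      have hpos : 0 < (S.filter (F.Adj v)).card := by omega
      obtain ⟨u, hu⟩ := Finset.card_pos.1 hpos
      rw [Finset.mem_filter] at hu
      obtain ⟨huS, hvu⟩ := hu
      have huI : u ∉ FRint F S := fun h => hJ v hv u h hvu
      have huuniq : ∀ x ∈ S, F.Adj u x → x = v := by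
        intro x hxS hux
        have hle : (S.filter (F.Adj u)).card ≤ 1 := by
          by_contra h
          push_neg at h
          exact huI (FRint_of huS h)
        exact Finset.card_le_one.1 hle x (Finset.mem_filter.2 ⟨hxS, hux⟩) v
          (Finset.mem_filter.2 ⟨hvS, hvu.symm⟩)
      set D : Finset V := insert v (S.filter (F.Adj v)) with hDdef
      have hsub : D ⊆ S := by
        rw [hDdef]
        exact Finset.insert_subset hvS (Finset.filter_subset _ _)
      refine FRfinish (t := 1) (a1 := fun _ => v) (b1 := fun _ => u) hsub
        ⟨v, Finset.mem_insert_self _ _⟩ ?_ ?_ ?_ ?_ ih hS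
      · exact ⟨fun _ => ⟨hvS, huS, hvu⟩, fun i j hij =>
          absurd (Subsingleton.elim i j) hij⟩
      · exact fun _ => ⟨Finset.mem_insert_self _ _,
          Finset.mem_insert_of_mem (Finset.mem_filter.2 ⟨huS, hvu⟩)⟩
      · intro _ x hx
        rw [Finset.mem_sdiff] at hx
        obtain ⟨hxS, hxD⟩ := hx
        constructor
        · intro h
          exact hxD (Finset.mem_insert_of_mem (Finset.mem_filter.2 ⟨hxS, h.symm⟩))
        · intro h
          have := huuniq x hxS h.symm
          subst this
          exact hxD (Finset.mem_insert_self _ _)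
      · -- drop bound
        have hsubI : FRint F S ⊆ insert v (FRint F (S \ D)) := by
          intro x hx
          by_cases hxv : x = v
          · subst hxv; exact Finset.mem_insert_self _ _
          refine Finset.mem_insert_of_mem (FRint_stable hx ?_ ?_)
          · intro hxD
            rw [hDdef, Finset.mem_insert] at hxD
            rcases hxD with h | h
            · exact hxv h
            · rw [Finset.mem_filter] at h
              exact hJ v hv x hx h.2
          · intro y hyS hxy hyD
            rw [hDdef, Finset.mem_insert] at hyD
            rcases hyD with rfl | h
            · exact hJ x hx y hv hxy
            · rw [Finset.mem_filter] at h
              have hyI : y ∉ FRint F S := fun hyI => hJ v hv y hyI h.2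
              have hle : (S.filter (F.Adj y)).card ≤ 1 := by
                by_contra hc
                push_neg at hc
                exact hyI (FRint_of hyS hc)
              have := Finset.card_le_one.1 hle x
                (Finset.mem_filter.2 ⟨(FRint_mem hx).1, hxy.symm⟩) v
                (Finset.mem_filter.2 ⟨hvS, h.2.symm⟩)
              exact hxv this
        have := Finset.card_le_card hsubI
        have h2 := Finset.card_insert_le v (FRint F (S \ D))
        omega
    · -- STEP B : there is an edge between internal vertices
      push_neg at hJ
      obtain ⟨x0, hx0, y0, hy0, hxy0⟩ := hJ
      set I := FRint F S with hIdef
      set Nset : Set ℕ := {m | ∃ (a b : V) (p : F.Walk a b), p.IsPath ∧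
        (∀ x ∈ p.support, x ∈ I) ∧ p.length = m} with hNdef
      have h1N : 1 ∈ Nset := by
        refine ⟨x0, y0, SimpleGraph.Walk.cons hxy0 SimpleGraph.Walk.nil, ?_, ?_, rfl⟩
        · rw [SimpleGraph.Walk.cons_isPath_iff]
          exact ⟨SimpleGraph.Walk.IsPath.nil, by simp [hxy0.ne]⟩
        · intro x hx
          simp only [SimpleGraph.Walk.support_cons, SimpleGraph.Walk.support_nil,
            List.mem_cons, List.mem_singleton] at hx
          rcases hx with rfl | hx
          · exact hx0
          · rcases hx with rfl | hx
            · exact hy0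
            · simp at hx
      have hbdd : BddAbove Nset := by
        refine ⟨Fintype.card V, fun m hm => ?_⟩
        obtain ⟨a, b, p, hp, -, hlen⟩ := hm
        exact hlen ▸ le_of_lt hp.length_lt
      have hLmem := Nat.sSup_mem ⟨1, h1N⟩ hbdd
      set L := sSup Nset with hLdef
      have hL1 : 1 ≤ L := le_csSup hbdd h1N
      have hmax : ∀ (a b : V) (r : F.Walk a b), r.IsPath →
          (∀ x ∈ r.support, x ∈ I) → r.length ≤ L :=
        fun a b r hr hrs => le_csSup hbdd ⟨a, b, r, hr, hrs, rfl⟩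
      obtain ⟨uu, vv, p, hp, hsupp, hlen⟩ := hLmem
      cases p with
      | nil => rw [SimpleGraph.Walk.length_nil] at hlen; omega
      | cons huw q =>
        rename_i w
        rw [SimpleGraph.Walk.cons_isPath_iff] at hp
        obtain ⟨hq, huq⟩ := hp
        have hqsupp : ∀ x ∈ q.support, x ∈ I := fun x hx => hsupp x (by
          rw [SimpleGraph.Walk.support_cons]; exact List.mem_cons_of_mem _ hx)
        have hlenq : q.length + 1 = L := by
          rw [SimpleGraph.Walk.length_cons] at hlen; omega
        set z2 := q.getVert 1 with hz2def
        have hz2supp : z2 ∈ q.support := walk_getVert_one_mem_support q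
        have hwI : w ∈ I := hqsupp w q.start_mem_support
        have huuI : uu ∈ I := hsupp uu (by
          rw [SimpleGraph.Walk.support_cons]; exact List.mem_cons_self)
        -- KEY CLAIM
        have K : ∀ y ∈ I, F.Adj w y → y ≠ z2 → ∀ z ∈ I, F.Adj z y → z = w := by
          intro y hy hwy hyz2 z hz hzy
          by_contra hzw
          have hyq : y ∉ q.support := by
            intro hyq
            have hr : (q.takeUntil y hyq).IsPath := hq.takeUntil hyq
            have hcyc : (SimpleGraph.Walk.cons hwy.symm (q.takeUntil y hyq)).IsCycle := by
              rw [SimpleGraph.Walk.cons_isCycle_iff]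
              refine ⟨hr, fun he => ?_⟩
              have he' : s(w, y) ∈ q.edges := by
                rw [Sym2.eq_swap] at he
                exact SimpleGraph.Walk.edges_takeUntil_subset _ _ he
              exact hyz2 (walk_edge_fst q hq he')
            exact hF _ hcyc
          have hpy : (SimpleGraph.Walk.cons hwy.symm q).IsPath := by
            rw [SimpleGraph.Walk.cons_isPath_iff]; exact ⟨hq, hyq⟩
          by_cases hzp : z ∈ q.support
          · have hr : (q.takeUntil z hzp).IsPath := hq.takeUntil hzp
            have hyr : y ∉ (q.takeUntil z hzp).support :=
              fun h => hyq (SimpleGraph.Walk.support_takeUntil_subset _ _ h)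
            have hinner : (SimpleGraph.Walk.cons hwy.symm (q.takeUntil z hzp)).IsPath := by
              rw [SimpleGraph.Walk.cons_isPath_iff]; exact ⟨hr, hyr⟩
            have hcyc : (SimpleGraph.Walk.cons hzy
                (SimpleGraph.Walk.cons hwy.symm (q.takeUntil z hzp))).IsCycle := by
              rw [SimpleGraph.Walk.cons_isCycle_iff]
              refine ⟨hinner, fun he => ?_⟩
              rw [SimpleGraph.Walk.edges_cons] at he
              rcases List.mem_cons.1 he with he | he
              · rw [Sym2.eq_iff] at he
                rcases he with ⟨rfl, -⟩ | ⟨h1, -⟩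
                · exact hzy.ne rfl
                · exact hzw h1
              · exact hyr (SimpleGraph.Walk.snd_mem_support_of_mem_edges _ he)
            exact hF _ hcyc
          · have hzpy : z ∉ (SimpleGraph.Walk.cons hwy.symm q).support := by
              rw [SimpleGraph.Walk.support_cons]
              intro h
              rcases List.mem_cons.1 h with rfl | h
              · exact hzy.ne rfl
              · exact hzp h
            have hext : (SimpleGraph.Walk.cons hzy
                (SimpleGraph.Walk.cons hwy.symm q)).IsPath := by
              rw [SimpleGraph.Walk.cons_isPath_iff]; exact ⟨hpy, hzpy⟩
            have hle := hmax _ _ _ hext (by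
              intro x hx
              rw [SimpleGraph.Walk.support_cons] at hx
              rcases List.mem_cons.1 hx with rfl | hx
              · exact hz
              rw [SimpleGraph.Walk.support_cons] at hx
              rcases List.mem_cons.1 hx with rfl | hx
              · exact hy
              · exact hqsupp _ hx)
            simp only [SimpleGraph.Walk.length_cons] at hle
            omega
        -- the cluster
        set C : Finset V := I.filter (fun y => F.Adj w y ∧ y ≠ z2) with hCdef
        have hCI : ∀ c ∈ C, c ∈ I ∧ F.Adj w c ∧ c ≠ z2 := by
          intro c hc; rw [hCdef, Finset.mem_filter] at hc; exact ⟨hc.1, hc.2.1, hc.2.2⟩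
        have huuC : uu ∈ C := by
          rw [hCdef, Finset.mem_filter]
          exact ⟨huuI, huw.symm, fun h => huq (h ▸ hz2supp)⟩
        have hCne : C.Nonempty := ⟨uu, huuC⟩
        have htpos : 1 ≤ C.card := Finset.card_pos.2 hCne
        have hIS : ∀ x ∈ I, x ∈ S := fun x hx => (FRint_mem hx).1
        -- leaf choice
        have hlf : ∀ c ∈ C, ∃ x, x ∈ S ∧ F.Adj c x ∧ x ≠ w := by
          intro c hc
          obtain ⟨hcI, hcw, hcz⟩ := hCI c hc
          have hdeg := (FRint_mem hcI).2
          have hone : 1 < (S.filter (F.Adj c)).card := by omega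
          obtain ⟨x1, hx1, x2, hx2, hne⟩ := Finset.one_lt_card.1 hone
          rw [Finset.mem_filter] at hx1 hx2
          by_cases h : x1 = w
          · exact ⟨x2, hx2.1, hx2.2, fun hh => hne (h ▸ hh ▸ rfl)⟩
          · exact ⟨x1, hx1.1, hx1.2, h⟩
        have hleaf : ∀ c ∈ C, ∀ x, x ∈ S → F.Adj c x → x ≠ w →
            x ∉ I ∧ ∀ y ∈ S, F.Adj x y → y = c := by
          intro c hc x hxS hcx hxw
          obtain ⟨hcI, hcw, hcz⟩ := hCI c hc
          have hxI : x ∉ I := fun hxI => hxw (K c hcI hcw hcz x hxI hcx.symm)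
          have hcard : (S.filter (F.Adj x)).card ≤ 1 := by
            by_contra h
            push_neg at h
            exact hxI (FRint_of hxS h)
          refine ⟨hxI, fun y hyS hxy => ?_⟩
          exact Finset.card_le_one.1 hcard y (Finset.mem_filter.2 ⟨hyS, hxy⟩) c
            (Finset.mem_filter.2 ⟨hIS c hcI, hcx.symm⟩)
        -- the deleted set
        set D : Finset V := insert w (C ∪ C.biUnion (fun c => S.filter (F.Adj c)))
          with hDdef
        have hsub : D ⊆ S := by
          rw [hDdef]
          refine Finset.insert_subset (hIS w hwI) (Finset.union_subset ?_ ?_)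
          · exact fun c hc => hIS c (hCI c hc).1
          · intro x hx
            rw [Finset.mem_biUnion] at hx
            obtain ⟨c, -, hx⟩ := hx
            exact (Finset.mem_filter.1 hx).1
        have hCD : ∀ c ∈ C, c ∈ D := fun c hc => by
          rw [hDdef]
          exact Finset.mem_insert_of_mem (Finset.mem_union_left _ hc)
        have hwD : w ∈ D := by rw [hDdef]; exact Finset.mem_insert_self _ _
        -- enumeration
        set t := C.card with htdef
        set a1 : Fin t → V := fun i => (C.equivFin.symm i : V) with ha1def
        have ha1C : ∀ i, a1 i ∈ C := fun i => (C.equivFin.symm i).2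
        have ha1inj : ∀ i j, a1 i = a1 j → i = j := by
          intro i j h
          have := C.equivFin.symm.injective (Subtype.ext h)
          exact this
        have hb1ex : ∀ i, ∃ x, x ∈ S ∧ F.Adj (a1 i) x ∧ x ≠ w :=
          fun i => hlf (a1 i) (ha1C i)
        set b1 : Fin t → V := fun i => Classical.choose (hb1ex i) with hb1def
        have hb1 : ∀ i, b1 i ∈ S ∧ F.Adj (a1 i) (b1 i) ∧ b1 i ≠ w :=
          fun i => Classical.choose_spec (hb1ex i)
        have hbl : ∀ i, b1 i ∉ I ∧ ∀ y ∈ S, F.Adj (b1 i) y → y = a1 i :=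
          fun i => hleaf (a1 i) (ha1C i) (b1 i) (hb1 i).1 (hb1 i).2.1 (hb1 i).2.2
        have hKa : ∀ i, ∀ z ∈ I, F.Adj z (a1 i) → z = w := by
          intro i z hz hza
          obtain ⟨hcI, hcw, hcz⟩ := hCI (a1 i) (ha1C i)
          exact K (a1 i) hcI hcw hcz z hz hza
        have hwC : w ∉ C := by
          intro h
          exact F.loopless.irrefl w (hCI w h).2.1
        -- the matching
        have h1 : FRim F S t a1 b1 := by
          constructor
          · exact fun i => ⟨hIS _ (hCI _ (ha1C i)).1, (hb1 i).1, (hb1 i).2.1⟩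
          · intro i j hij
            have haa : a1 i ≠ a1 j := fun h => hij (ha1inj i j h)
            have hab : ∀ i' j', a1 i' ≠ b1 j' := by
              intro i' j' h
              exact (hbl j').1 (h ▸ (hCI _ (ha1C i')).1)
            refine ⟨haa, ?_, hab i j, ?_, ?_, ?_⟩
            · intro h
              have : a1 j = a1 i := (hbl i).2 (a1 j) (hIS _ (hCI _ (ha1C j)).1)
                (by rw [h]; exact (hb1 j).2.1.symm)
              exact haa this.symm
            · intro h
              have := hKa j (a1 i) (hCI _ (ha1C i)).1 h
              exact hwC (this ▸ ha1C i)
            · intro h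
              exact hab i j ((hbl i).2 (b1 j) (hb1 j).1 h).symm
            · intro h
              have := (hbl j).2 (a1 i) (hIS _ (hCI _ (ha1C i)).1) h.symm
              exact haa this
        have hD1 : ∀ i, a1 i ∈ D ∧ b1 i ∈ D := by
          intro i
          refine ⟨hCD _ (ha1C i), ?_⟩
          rw [hDdef]
          refine Finset.mem_insert_of_mem (Finset.mem_union_right _ ?_)
          rw [Finset.mem_biUnion]
          exact ⟨a1 i, ha1C i, Finset.mem_filter.2 ⟨(hb1 i).1, (hb1 i).2.1⟩⟩
        have hsep : ∀ i, ∀ x ∈ S \ D, ¬ F.Adj x (a1 i) ∧ ¬ F.Adj x (b1 i) := by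
          intro i x hx
          rw [Finset.mem_sdiff] at hx
          obtain ⟨hxS, hxD⟩ := hx
          constructor
          · intro h
            refine hxD ?_
            rw [hDdef]
            refine Finset.mem_insert_of_mem (Finset.mem_union_right _ ?_)
            rw [Finset.mem_biUnion]
            exact ⟨a1 i, ha1C i, Finset.mem_filter.2 ⟨hxS, h.symm⟩⟩
          · intro h
            have := (hbl i).2 x hxS h.symm
            exact hxD (this ▸ hCD _ (ha1C i))
        -- drop bound
        have hdropsub : FRint F S ⊆ insert w (insert z2 C) ∪ FRint F (S \ D) := by
          intro x hx
          by_cases hxw : x = w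
          · subst hxw; exact Finset.mem_union_left _ (Finset.mem_insert_self _ _)
          by_cases hxz : x = z2
          · subst hxz
            exact Finset.mem_union_left _
              (Finset.mem_insert_of_mem (Finset.mem_insert_self _ _))
          by_cases hxC : x ∈ C
          · exact Finset.mem_union_left _
              (Finset.mem_insert_of_mem (Finset.mem_insert_of_mem hxC))
          refine Finset.mem_union_right _ (FRint_stable hx ?_ ?_)
          · intro hxD
            rw [hDdef, Finset.mem_insert] at hxD
            rcases hxD with h | h
            · exact hxw h
            rcases Finset.mem_union.1 h with h | h
            · exact hxC h
            · rw [Finset.mem_biUnion] at h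
              obtain ⟨c, hc, h⟩ := h
              rw [Finset.mem_filter] at h
              obtain ⟨hcI, hcw, hcz⟩ := hCI c hc
              exact hxw (K c hcI hcw hcz x hx h.2.symm)
          · intro y hyS hxy hyD
            by_cases hyw : y = w
            · subst hyw
              exact hxC (by
                rw [hCdef, Finset.mem_filter]
                exact ⟨hx, hxy.symm, hxz⟩)
            rw [hDdef, Finset.mem_insert] at hyD
            rcases hyD with h | h
            · exact hyw h
            rcases Finset.mem_union.1 h with h | h
            · obtain ⟨hcI, hcw, hcz⟩ := hCI y h
              exact hxw (K y hcI hcw hcz x hx hxy)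
            · rw [Finset.mem_biUnion] at h
              obtain ⟨c, hc, h⟩ := h
              rw [Finset.mem_filter] at h
              have hxc := (hleaf c hc y h.1 h.2 hyw).2 x (hIS x hx) hxy.symm
              exact hxC (hxc ▸ hc)
        have hdrop : (FRint F S).card ≤ (FRint F (S \ D)).card + 6 * t := by
          have hcard := Finset.card_le_card hdropsub
          have h2 := Finset.card_union_le (insert w (insert z2 C)) (FRint F (S \ D))
          have h3 := Finset.card_insert_le w (insert z2 C)
          have h4 := Finset.card_insert_le z2 C
          omega
        exact FRfinish hsub ⟨w, hwD⟩ h1 hD1 hsep hdrop ih hS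

end Forest

/-- A forest whose maximum induced matching has size at most `p`
has at most `6 p` vertices of degree at least 2. -/
theorem forest_reduced_size {V : Type*} [Fintype V] [DecidableEq V]
    (F : SimpleGraph V) [DecidableRel F.Adj] (hF : F.IsAcyclic)
    (p : ℕ) (hp : 0 < p)
    (hmim : ¬ ∃ a b : Fin (p + 1) → V,
      (∀ i, F.Adj (a i) (b i)) ∧
      (∀ i j, i ≠ j →
        a i ≠ a j ∧ b i ≠ b j ∧ a i ≠ b j ∧
        ¬ F.Adj (a i) (a j) ∧ ¬ F.Adj (b i) (b j) ∧ ¬ F.Adj (a i) (b j))) :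
    (Finset.univ.filter fun v => 2 ≤ F.degree v).card ≤ 6 * p := by
  by_contra hcon
  push_neg at hcon
  obtain ⟨k, a, b, him, hcard⟩ := FRmain hF Finset.univ.card Finset.univ le_rfl
  have hdeg : ∀ v : V, (Finset.univ.filter (F.Adj v)).card = F.degree v := by
    intro v
    rw [SimpleGraph.degree]
    congr 1
    ext x
    simp [SimpleGraph.mem_neighborFinset]
  have heq : FRint F Finset.univ = Finset.univ.filter (fun v => 2 ≤ F.degree v) := by
    unfold FRint
    ext v
    simp [hdeg v]
  rw [heq] at hcard
  have hk : p + 1 ≤ k := by omega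
  refine hmim ⟨a ∘ Fin.castLE hk, b ∘ Fin.castLE hk, ?_, ?_⟩
  · exact fun i => (him.1 (Fin.castLE hk i)).2.2
  · intro i j hij
    refine him.2 _ _ (fun h => hij ?_)
    exact Fin.ext (by simpa using congrArg Fin.val h)
end

section
/- Let G be a finite graph, A ⊆ V(G), and k a nonnegative integer. Then the maximum induced matching of the bipartite graph G[A, V(G)\A] (edges of G crossing the cut) has size at most k if and only if for every S ⊆ A there exists R ⊆ S with |R| ≤ k such that N(R) ∩ (V(G)\A) = N(S) ∩ (V(G)\A). -/
open Set

/-- Auxiliary greedy lemma: if no small representative set exists for `S` (with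
neighborhoods restricted to `T`), then there is an induced matching of size `k+1`. -/
lemma aux_induced_matching {V : Type*} [Fintype V] (E : V → V → Prop) :
    ∀ (k : ℕ) (S T : Set V),
    (¬ ∃ R ⊆ S, R.ncard ≤ k ∧
      {v | v ∈ T ∧ ∃ u ∈ R, E u v} = {v | v ∈ T ∧ ∃ u ∈ S, E u v}) →
    ∃ a b : Fin (k+1) → V, (∀ i, a i ∈ S) ∧ (∀ i, b i ∈ T) ∧ (∀ i, E (a i) (b i)) ∧
      Function.Injective a ∧ Function.Injective b ∧
      ∀ i j, i ≠ j → ¬ E (a i) (b j) := by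
  intro k
  induction k with
  | zero =>
    intro S T h
    have hne : ∃ v, v ∈ T ∧ ∃ u ∈ S, E u v := by
      by_contra hc
      push_neg at hc
      refine h ⟨∅, empty_subset _, by simp, ?_⟩
      ext v
      simp only [mem_setOf_eq, mem_empty_iff_false, false_and, exists_false, and_false,
        false_iff]
      rintro ⟨hvT, u, huS, huv⟩
      exact hc v hvT u huS huv
    obtain ⟨v, hvT, u, huS, huv⟩ := hne
    refine ⟨fun _ => u, fun _ => v, fun _ => huS, fun _ => hvT, fun _ => huv, ?_, ?_, ?_⟩
    · intro i j _; exact Subsingleton.elim (α := Fin 1) i j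
    · intro i j _; exact Subsingleton.elim (α := Fin 1) i j
    · intro i j hij; exact absurd (Subsingleton.elim (α := Fin 1) i j) hij
  | succ k ih =>
    intro S T h
    have hBne : ({v | v ∈ T ∧ ∃ u ∈ S, E u v}).Nonempty := by
      by_contra hc
      rw [not_nonempty_iff_eq_empty] at hc
      refine h ⟨∅, empty_subset _, by simp, ?_⟩
      rw [hc]
      ext v
      simp
    obtain ⟨b, hb, hmin⟩ : ∃ b ∈ {v | v ∈ T ∧ ∃ u ∈ S, E u v}, ∀ v ∈ {v | v ∈ T ∧ ∃ u ∈ S, E u v},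
        {u | u ∈ S ∧ E u v} ≤ {u | u ∈ S ∧ E u b} → {u | u ∈ S ∧ E u b} = {u | u ∈ S ∧ E u v} := by
      obtain ⟨b, hb, hmin⟩ := Set.Finite.exists_minimalFor
        (fun v => {u | u ∈ S ∧ E u v}) {v | v ∈ T ∧ ∃ u ∈ S, E u v} (Set.toFinite _) hBne
      exact ⟨b, hb, fun v hv hle => le_antisymm (hmin hv hle) hle⟩
    obtain ⟨hbT, a, haS, hab⟩ := hb
    set S' : Set V := {u | u ∈ S ∧ ¬ E u b} with hS'
    set T' : Set V := {v | v ∈ T ∧ ¬ E a v} with hT'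
    have h' : ¬ ∃ R ⊆ S', R.ncard ≤ k ∧
        {v | v ∈ T' ∧ ∃ u ∈ R, E u v} = {v | v ∈ T' ∧ ∃ u ∈ S', E u v} := by
      rintro ⟨R, hRS', hRk, hReq⟩
      apply h
      refine ⟨insert a R, ?_, ?_, ?_⟩
      · intro x hx
        rcases hx with rfl | hx
        · exact haS
        · exact (hRS' hx).1
      · exact le_trans (Set.ncard_insert_le a R) (by omega)
      · ext v
        simp only [mem_setOf_eq]
        constructor
        · rintro ⟨hvT, u, hu, huv⟩
          rcases hu with rfl | hu
          · exact ⟨hvT, u, haS, huv⟩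
          · exact ⟨hvT, u, (hRS' hu).1, huv⟩
        · rintro ⟨hvT, s, hsS, hsv⟩
          refine ⟨hvT, ?_⟩
          by_cases hav : E a v
          · exact ⟨a, mem_insert _ _, hav⟩
          · have hvT' : v ∈ T' := ⟨hvT, hav⟩
            have hS'v : ∃ u ∈ S', E u v := by
              by_contra hc
              push_neg at hc
              have hsub : {u | u ∈ S ∧ E u v} ⊆ {u | u ∈ S ∧ E u b} := by
                rintro u ⟨huS, huv⟩
                refine ⟨huS, ?_⟩
                by_contra hub
                exact hc u ⟨huS, hub⟩ huv
              have hvmem : v ∈ {v | v ∈ T ∧ ∃ u ∈ S, E u v} := ⟨hvT, s, hsS, hsv⟩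
              have heq := hmin v hvmem hsub
              have hav' : a ∈ {u | u ∈ S ∧ E u v} := heq ▸ (⟨haS, hab⟩ : a ∈ {u | u ∈ S ∧ E u b})
              exact hav hav'.2
            have hv : v ∈ {v | v ∈ T' ∧ ∃ u ∈ S', E u v} := ⟨hvT', hS'v⟩
            rw [← hReq] at hv
            obtain ⟨_, u, huR, huv⟩ := hv
            exact ⟨u, mem_insert_of_mem _ huR, huv⟩
    obtain ⟨a', b', ha'S, hb'T, hE', hainj, hbinj, hind⟩ := ih S' T' h'
    refine ⟨Fin.cons a a', Fin.cons b b', ?_, ?_, ?_, ?_, ?_, ?_⟩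
    · intro i
      induction i using Fin.cases with
      | zero => simpa using haS
      | succ i => simpa using (ha'S i).1
    · intro i
      induction i using Fin.cases with
      | zero => simpa using hbT
      | succ i => simpa using (hb'T i).1
    · intro i
      induction i using Fin.cases with
      | zero => simpa using hab
      | succ i => simpa using hE' i
    · rw [Fin.cons_injective_iff]
      refine ⟨?_, hainj⟩
      rintro ⟨i, rfl⟩
      exact (ha'S i).2 hab
    · rw [Fin.cons_injective_iff]
      refine ⟨?_, hbinj⟩
      rintro ⟨i, rfl⟩
      exact (hb'T i).2 hab
    · intro i j hij
      induction i using Fin.cases with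
      | zero =>
        induction j using Fin.cases with
        | zero => exact absurd rfl hij
        | succ j => simpa using (hb'T j).2
      | succ i =>
        induction j using Fin.cases with
        | zero => simpa using (ha'S i).2
        | succ j =>
          have : i ≠ j := fun hh => hij (by rw [hh])
          simpa using hind i j this

/-- For a finite graph `G` and `A ⊆ V(G)`, the crossing bipartite graph
`G[A, V(G) \ A]` has no induced matching of size `k + 1` if and only if for every
`S ⊆ A` there is `R ⊆ S` with `|R| ≤ k` whose neighborhood outside `A` equals that
of `S`. -/
theorem mim_le_iff_neighborhood_representatives {V : Type*} [Fintype V]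
    (G : SimpleGraph V) (A : Set V) (k : ℕ) :
    (¬ ∃ a b : Fin (k + 1) → V,
      (∀ i, a i ∈ A) ∧ (∀ i, b i ∉ A) ∧
      (∀ i, G.Adj (a i) (b i)) ∧
      Function.Injective a ∧ Function.Injective b ∧
      (∀ i j, i ≠ j → ¬ G.Adj (a i) (b j))) ↔
    (∀ S ⊆ A, ∃ R ⊆ S, R.ncard ≤ k ∧
      {v | v ∉ A ∧ ∃ u ∈ R, G.Adj u v} = {v | v ∉ A ∧ ∃ u ∈ S, G.Adj u v}) := by
  constructor
  · intro hno S hSA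
    by_contra hc
    obtain ⟨a, b, haS, hbT, hadj, hainj, hbinj, hind⟩ :=
      aux_induced_matching G.Adj k S {v | v ∉ A}
        (fun ⟨R, h1, h2, h3⟩ => hc ⟨R, h1, h2, h3⟩)
    exact hno ⟨a, b, fun i => hSA (haS i), hbT, hadj, hainj, hbinj, hind⟩
  · rintro hrep ⟨a, b, haA, hbA, hadj, hainj, hbinj, hind⟩
    obtain ⟨R, hRS, hRk, heq⟩ := hrep (Set.range a) (by rintro _ ⟨i, rfl⟩; exact haA i)
    have hmem : ∀ i, a i ∈ R := by
      intro i
      have hb : b i ∈ {v | v ∉ A ∧ ∃ u ∈ Set.range a, G.Adj u v} :=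
        ⟨hbA i, a i, ⟨i, rfl⟩, hadj i⟩
      rw [← heq] at hb
      obtain ⟨_, u, huR, hub⟩ := hb
      obtain ⟨j, rfl⟩ := hRS huR
      by_cases hij : j = i
      · subst hij; exact huR
      · exact absurd hub (hind j i hij)
    have hReq : R = Set.range a :=
      subset_antisymm hRS (by rintro _ ⟨i, rfl⟩; exact hmem i)
    have hcard : (Set.range a).ncard = k + 1 := by
      rw [← Set.image_univ, Set.ncard_image_of_injective _ hainj, Set.ncard_univ]
      simp
    rw [hReq, hcard] at hRk
    omega
end

section
/- Let k and w be positive integers and let (A, B, C) be a partition of the vertex set of a finite simple graph G such that there are no edges between A and C, and |B| = w. Let H be the k-power of G (same vertex set; u and v adjacent in H iff their distance in G is at most k and u ≠ v). Then the maximum induced matching of the bipartite graph H[A ∪ B, C] has size at most w. -/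
lemma walk_through_B {V : Type*} (G : SimpleGraph V) (A B C : Set V)
    (hUnion : A ∪ B ∪ C = Set.univ)
    (hAC : A ∩ C = ∅) (hBC : B ∩ C = ∅)
    (hnoedge : ∀ u ∈ A, ∀ v ∈ C, ¬ G.Adj u v) :
    ∀ {u v : V} (p : G.Walk u v), u ∈ A ∪ B → v ∈ C →
      ∃ m, m ∈ B ∧ ∃ (p1 : G.Walk u m) (p2 : G.Walk m v),
        p1.length + p2.length ≤ p.length := by
  intro u v p
  induction p with
  | nil =>
    intro hu hv
    exfalso
    rcases hu with hu | hu
    · exact Set.eq_empty_iff_forall_notMem.mp hAC _ ⟨hu, hv⟩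
    · exact Set.eq_empty_iff_forall_notMem.mp hBC _ ⟨hu, hv⟩
  | @cons u x v h q ih =>
    intro hu hv
    by_cases hB' : u ∈ B
    · exact ⟨u, hB', SimpleGraph.Walk.nil, SimpleGraph.Walk.cons h q, by simp⟩
    · have huA : u ∈ A := hu.resolve_right hB'
      have hxC : x ∉ C := fun hx => hnoedge u huA x hx h
      have hx : x ∈ A ∪ B := by
        have : x ∈ A ∪ B ∪ C := hUnion ▸ Set.mem_univ x
        rcases this with hx | hx
        · exact hx
        · exact absurd hx hxC
      obtain ⟨m, hm, p1, p2, hlen⟩ := ih hx hv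
      exact ⟨m, hm, SimpleGraph.Walk.cons h p1, p2, by simp; omega⟩

/-- If `(A, B, C)` is a vertex partition of a finite graph `G` with no
edges between `A` and `C` and `|B| = w`, then in the `k`-power `H` of `G` the
bipartite graph `H[A ∪ B, C]` has no induced matching of size `w + 1`. -/
theorem power_mim_le_of_separator {V : Type*} [Fintype V]
    (G : SimpleGraph V) (A B C : Set V) (k w : ℕ) (hk : 0 < k) (hw : 0 < w)
    (hUnion : A ∪ B ∪ C = Set.univ)
    (hAB : A ∩ B = ∅) (hAC : A ∩ C = ∅) (hBC : B ∩ C = ∅)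
    (hnoedge : ∀ u ∈ A, ∀ v ∈ C, ¬ G.Adj u v)
    (hB : B.ncard = w)
    (H : SimpleGraph V)
    (hH : ∀ u v, H.Adj u v ↔ u ≠ v ∧ G.Reachable u v ∧ G.dist u v ≤ k) :
    ¬ ∃ a b : Fin (w + 1) → V,
      (∀ i, a i ∈ A ∪ B) ∧ (∀ i, b i ∈ C) ∧
      (∀ i, H.Adj (a i) (b i)) ∧
      Function.Injective a ∧ Function.Injective b ∧
      (∀ i j, i ≠ j → ¬ H.Adj (a i) (b j)) := by
  rintro ⟨a, b, ha, hb, hadj, hainj, hbinj, hind⟩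
  -- for each i, get a B-vertex m i and walks
  have key : ∀ i, ∃ m, m ∈ B ∧ ∃ (p1 : G.Walk (a i) m) (p2 : G.Walk m (b i)),
      p1.length + p2.length ≤ k := by
    intro i
    obtain ⟨_, hreach, hdist⟩ := (hH _ _).mp (hadj i)
    obtain ⟨p, hp⟩ := hreach.exists_walk_length_eq_dist
    obtain ⟨m, hm, p1, p2, hlen⟩ :=
      walk_through_B G A B C hUnion hAC hBC hnoedge p (ha i) (hb i)
    exact ⟨m, hm, p1, p2, by omega⟩
  choose m hmB p1 p2 hlen using key
  -- pigeonhole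
  haveI : Fintype ↥B := (B.toFinite).fintype
  have hcard : Fintype.card ↥B < w + 1 := by
    have : Fintype.card ↥B = B.ncard := by
      rw [← Nat.card_eq_fintype_card, Nat.card_coe_set_eq]
    omega
  obtain ⟨i, j, hij, hmeq⟩ :=
    Fintype.exists_ne_map_eq_of_card_lt (fun i : Fin (w + 1) => (⟨m i, hmB i⟩ : ↥B))
      (by simpa using hcard)
  have hmeq' : m i = m j := congrArg Subtype.val hmeq
  -- the cross adjacency
  have hne : ∀ i' j' : Fin (w + 1), a i' ≠ b j' := by
    intro i' j' h
    rcases ha i' with h' | h'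
    · exact Set.eq_empty_iff_forall_notMem.mp hAC (a i') ⟨h', h ▸ hb j'⟩
    · exact Set.eq_empty_iff_forall_notMem.mp hBC (a i') ⟨h', h ▸ hb j'⟩
  have cross : ∀ i' j' : Fin (w + 1), m i' = m j' →
      (p1 i').length + (p2 j').length ≤ k → H.Adj (a i') (b j') := by
    intro i' j' hm hlk
    refine (hH _ _).mpr ⟨hne i' j', ⟨(p1 i').append ((p2 j').copy hm.symm rfl)⟩, ?_⟩
    refine le_trans (SimpleGraph.dist_le ((p1 i').append ((p2 j').copy hm.symm rfl))) ?_
    simpa [SimpleGraph.Walk.length_append] using hlk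
  have h1 := hlen i
  have h2 := hlen j
  rcases le_or_gt ((p1 i).length + (p2 j).length) k with hcase | hcase
  · exact hind i j hij (cross i j hmeq' hcase)
  · exact hind j i hij.symm (cross j i hmeq'.symm (by omega))
end

section
/- Let k and w be positive integers and let (A, B) be a partition of the vertex set of a finite simple graph G. Suppose A is partitioned into at most w label classes such that any two vertices in the same label class have identical neighborhoods in B. Let H be the k-power of G. Then the maximum induced matching of the bipartite graph H[A, B] has size at most w. -/
open SimpleGraph

/-- Crossing lemma: a walk from `A` to `B` contains an edge crossing from `A` to `B`. -/
lemma exists_crossing {V : Type*} (G : SimpleGraph V) (A B : Set V)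
    (hUnion : A ∪ B = Set.univ) (hAB : A ∩ B = ∅) :
    ∀ {u v : V} (p : G.Walk u v), u ∈ A → v ∈ B →
      ∃ (x q : V) (p1 : G.Walk u x) (p2 : G.Walk q v),
        x ∈ A ∧ q ∈ B ∧ G.Adj x q ∧ p1.length + 1 + p2.length = p.length := by
  intro u v p
  induction p with
  | nil =>
    intro hu hv
    exact absurd (Set.mem_inter hu hv) (by simp [hAB])
  | @cons u u' v hadj p ih =>
    intro hu hv
    have hu' : u' ∈ A ∪ B := hUnion ▸ Set.mem_univ u'
    rcases hu' with hu' | hu'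
    · obtain ⟨x, q, p1, p2, hx, hq, hxq, hlen⟩ := ih hu' hv
      exact ⟨x, q, SimpleGraph.Walk.cons hadj p1, p2, hx, hq, hxq, by
        simp [SimpleGraph.Walk.length_cons] at hlen ⊢; omega⟩
    · exact ⟨u, u', SimpleGraph.Walk.nil, p, hu, hu', hadj, by
        simp [SimpleGraph.Walk.length_cons]; omega⟩

/-- If `(A, B)` is a vertex partition of a finite graph `G` and `A` is
labeled with at most `w` labels so that vertices with equal labels have identical
neighborhoods in `B`, then in the `k`-power `H` of `G` the bipartite graph `H[A, B]`
has no induced matching of size `w + 1`. -/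
theorem power_mim_le_of_labeling {V : Type*} [Fintype V]
    (G : SimpleGraph V) (A B : Set V) (k w : ℕ) (hk : 0 < k) (hw : 0 < w)
    (hUnion : A ∪ B = Set.univ) (hAB : A ∩ B = ∅)
    (f : V → Fin w)
    (hlabel : ∀ x ∈ A, ∀ y ∈ A, f x = f y → ∀ b ∈ B, (G.Adj x b ↔ G.Adj y b))
    (H : SimpleGraph V)
    (hH : ∀ u v, H.Adj u v ↔ u ≠ v ∧ G.Reachable u v ∧ G.dist u v ≤ k) :
    ¬ ∃ a b : Fin (w + 1) → V,
      (∀ i, a i ∈ A) ∧ (∀ i, b i ∈ B) ∧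
      (∀ i, H.Adj (a i) (b i)) ∧
      Function.Injective a ∧ Function.Injective b ∧
      (∀ i j, i ≠ j → ¬ H.Adj (a i) (b j)) := by
  rintro ⟨a, b, ha, hb, hadj, hainj, hbinj, hind⟩
  -- for each i, extract crossing data
  have hdata : ∀ i : Fin (w + 1), ∃ (x q : V) (p1 : G.Walk (a i) x) (p2 : G.Walk q (b i)),
      x ∈ A ∧ q ∈ B ∧ G.Adj x q ∧ p1.length + 1 + p2.length ≤ k := by
    intro i
    obtain ⟨_, hreach, hdist⟩ := (hH _ _).1 (hadj i)
    obtain ⟨p, hp⟩ := hreach.exists_walk_length_eq_dist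
    obtain ⟨x, q, p1, p2, hx, hq, hxq, hlen⟩ :=
      exists_crossing G A B hUnion hAB p (ha i) (hb i)
    exact ⟨x, q, p1, p2, hx, hq, hxq, by omega⟩
  choose x q p1 p2 hx hq hxq hlen using hdata
  -- pigeonhole on labels of the crossing vertices x i
  obtain ⟨i, j, hij, hfeq⟩ : ∃ i j : Fin (w + 1), i ≠ j ∧ f (x i) = f (x j) := by
    obtain ⟨i, j, hij, hfeq⟩ := Fintype.exists_ne_map_eq_of_card_lt (fun i => f (x i))
      (by simp)
    exact ⟨i, j, hij, hfeq⟩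
  -- key claim, symmetric in i and j
  have key : ∀ i j : Fin (w + 1), f (x i) = f (x j) →
      (p1 i).length ≤ (p1 j).length → i ≠ j → False := by
    intro i j hfeq hle hij
    -- x i is adjacent to q j since x j is
    have hadj' : G.Adj (x i) (q j) :=
      (hlabel (x i) (hx i) (x j) (hx j) hfeq (q j) (hq j)).2 (hxq j)
    -- splice a walk from a i to b j
    set pw : G.Walk (a i) (b j) := (p1 i).append (SimpleGraph.Walk.cons hadj' (p2 j)) with hpw
    have hpwlen : pw.length = (p1 i).length + 1 + (p2 j).length := by
      simp [hpw, SimpleGraph.Walk.length_append, SimpleGraph.Walk.length_cons]; omega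
    have hne : a i ≠ b j := by
      intro h
      exact absurd (Set.mem_inter (ha i) (h ▸ hb j)) (by simp [hAB])
    have : H.Adj (a i) (b j) := (hH _ _).2 ⟨hne, ⟨pw⟩, by
      have := SimpleGraph.dist_le pw
      have := hlen j
      omega⟩
    exact hind i j hij this
  rcases le_total (p1 i).length (p1 j).length with h | h
  · exact key i j hfeq h hij
  · exact key j i hfeq.symm h hij.symm
end

section
/- Let F be a forest and let R be a reduced forest of F. Then every vertex x of R of degree at most 1 in R that is a vertex of a component of F with at least 3 vertices has a neighbor y in F with y ∉ V(R) such that x is the only neighbor of y in F. -/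
/-- Let `R` be (the vertex set of) a reduced forest of a forest `F`: on
components with at least 3 vertices, `R` consists exactly of the vertices of degree at
least 2. Then every `x ∈ R` lying in a component of `F` with at least 3 vertices and
having at most one neighbor inside `R` has a neighbor `y ∉ R` in `F` whose unique
neighbor in `F` is `x`. -/
theorem reduced_forest_potential_leaf {V : Type*} [Fintype V] [DecidableEq V]
    (F : SimpleGraph V) [DecidableRel F.Adj] (hF : F.IsAcyclic)
    (R : Set V)
    (hR : ∀ x : V, 3 ≤ {u | F.Reachable x u}.ncard → (x ∈ R ↔ 2 ≤ F.degree x))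
    (x : V) (hx : x ∈ R)
    (hcomp : 3 ≤ {u | F.Reachable x u}.ncard)
    (hdeg : {y ∈ R | F.Adj x y}.ncard ≤ 1) :
    ∃ y : V, F.Adj x y ∧ y ∉ R ∧ ∀ z : V, F.Adj y z → z = x := by
  classical
  have hdx : 2 ≤ F.degree x := (hR x hcomp).mp hx
  -- there is a neighbor of x outside R
  have hy : ∃ y, F.Adj x y ∧ y ∉ R := by
    by_contra h
    push_neg at h
    have hsub : F.neighborSet x ⊆ {y ∈ R | F.Adj x y} := by
      intro y hyadj
      exact ⟨h y hyadj, hyadj⟩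
    have hle := Set.ncard_le_ncard hsub (Set.toFinite _)
    have hns : (F.neighborSet x).ncard = F.degree x := by
      rw [Set.ncard_eq_toFinset_card']
      simp [SimpleGraph.neighborFinset_def, SimpleGraph.degree]
    omega
  obtain ⟨y, hxy, hyR⟩ := hy
  have hreach : {u | F.Reachable y u} = {u | F.Reachable x u} := by
    ext u
    exact ⟨fun h => (hxy.reachable).trans h, fun h => (hxy.symm.reachable).trans h⟩
  have hcompy : 3 ≤ {u | F.Reachable y u}.ncard := by rw [hreach]; exact hcomp
  have hdy : ¬ 2 ≤ F.degree y := fun h => hyR ((hR y hcompy).mpr h)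
  have hdy1 : F.degree y ≤ 1 := by omega
  refine ⟨y, hxy, hyR, ?_⟩
  intro z hz
  have hxmem : x ∈ F.neighborFinset y := by
    rw [SimpleGraph.mem_neighborFinset]; exact hxy.symm
  have hzmem : z ∈ F.neighborFinset y := by
    rw [SimpleGraph.mem_neighborFinset]; exact hz
  by_contra hne
  have : 2 ≤ (F.neighborFinset y).card :=
    Finset.one_lt_card.mpr ⟨z, hzmem, x, hxmem, hne⟩
  rw [SimpleGraph.card_neighborFinset_eq_degree] at this
  omega
end

section
/- Let H be a bipartite graph with bipartition (A, B) and suppose every induced matching in H has size at most w. For each R ⊆ A with |R| ≤ w, let X_R be the set of vertices of A having a neighbor in B \ N(R). Then N(R) ∪ X_R is a minimal vertex cover of H. -/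
def IsVertexCover {V : Type*} (G : SimpleGraph V) (M : Set V) : Prop :=
  ∀ u v, G.Adj u v → u ∈ M ∨ v ∈ M

def IsMinimalVertexCover {V : Type*} (G : SimpleGraph V) (M : Set V) : Prop :=
  IsVertexCover G M ∧ ∀ M' ⊆ M, IsVertexCover G M' → M' = M

/-- Let `H` be bipartite with bipartition `(A, B)` in which every
induced matching has size at most `w`. For `R ⊆ A` with `|R| ≤ w`, letting `X_R` be
the set of vertices of `A` with a neighbor in `B \ N(R)`, the set `N(R) ∪ X_R` is a
minimal vertex cover of `H`. -/
theorem nbhd_union_XR_minimal_vertex_cover {V : Type*} [Fintype V]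
    (H : SimpleGraph V) (A B : Set V) (w : ℕ)
    (hpart : A ∪ B = Set.univ) (hdisj : A ∩ B = ∅)
    (hbip : ∀ u v, H.Adj u v → (u ∈ A ∧ v ∈ B) ∨ (u ∈ B ∧ v ∈ A))
    (hmim : ¬ ∃ a b : Fin (w + 1) → V,
      (∀ i, a i ∈ A) ∧ (∀ i, b i ∈ B) ∧
      (∀ i, H.Adj (a i) (b i)) ∧
      Function.Injective a ∧ Function.Injective b ∧
      (∀ i j, i ≠ j → ¬ H.Adj (a i) (b j)))
    (R : Set V) (hR : R ⊆ A) (hRcard : R.ncard ≤ w) :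
    IsMinimalVertexCover H
      ({v | ∃ r ∈ R, H.Adj r v} ∪
       {a ∈ A | ∃ b ∈ B, b ∉ {v | ∃ r ∈ R, H.Adj r v} ∧ H.Adj a b}) := by
  have hAB : ∀ x, x ∈ A → x ∈ B → False := fun x ha hb =>
    Set.eq_empty_iff_forall_notMem.mp hdisj x ⟨ha, hb⟩
  set N : Set V := {v | ∃ r ∈ R, H.Adj r v} with hNdef
  have hNB : ∀ v ∈ N, v ∈ B := by
    rintro v ⟨r, hr, hadj⟩
    rcases hbip r v hadj with ⟨_, hv⟩ | ⟨hrB, _⟩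
    · exact hv
    · exact absurd hrB (fun h => hAB r (hR hr) h)
  constructor
  · -- vertex cover
    intro u v hadj
    rcases hbip u v hadj with ⟨hu, hv⟩ | ⟨hu, hv⟩
    · by_cases hvN : v ∈ N
      · exact Or.inr (Or.inl hvN)
      · exact Or.inl (Or.inr ⟨hu, v, hv, hvN, hadj⟩)
    · by_cases huN : u ∈ N
      · exact Or.inl (Or.inl huN)
      · exact Or.inr (Or.inr ⟨hv, u, hu, huN, hadj.symm⟩)
  · -- minimality
    intro M' hsub hcov
    apply Set.Subset.antisymm hsub
    rintro x (⟨r, hr, hadj⟩ | ⟨hxA, b, hbB, hbN, hadj⟩)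
    · -- x ∈ N via r ∈ R; r is not in the cover set
      have hrM : r ∉ N ∪ {a ∈ A | ∃ b ∈ B, b ∉ N ∧ H.Adj a b} := by
        rintro (hrN | ⟨-, b, hbB, hbN, hadjb⟩)
        · exact hAB r (hR hr) (hNB r hrN)
        · exact hbN ⟨r, hr, hadjb⟩
      rcases hcov r x hadj with h | h
      · exact absurd (hsub h) hrM
      · exact h
    · -- x ∈ X_R via b ∈ B \ N; b is not in the cover set
      have hbM : b ∉ N ∪ {a ∈ A | ∃ b ∈ B, b ∉ N ∧ H.Adj a b} := by
        rintro (hbN' | ⟨hbA, -⟩)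
        · exact hbN hbN'
        · exact hAB b hbA hbB
      rcases hcov x b hadj with h | h
      · exact h
      · exact absurd (hsub h) hbM
end

section
/- Let T be a tree with leaf set L, let k be a positive integer, and let G be the graph on L where two leaves are adjacent iff their distance in T is at most k (a leaf power). Then the maximum induced matching across any cut of G of the form (A, L \ A), where A is the set of leaves below some edge of T, is at most 1. -/
/-- If `x` separates `a` from `b` (via deleting the edge `s(x,y)`), then
`dist a b = dist a x + dist x b`. -/
lemma dist_split_aux {ι : Type*} [DecidableEq ι] (T : SimpleGraph ι) (hc : T.Connected) (x y a b : ι)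
    (ha : (T.deleteEdges {s(x, y)}).Reachable x a)
    (hb : ¬ (T.deleteEdges {s(x, y)}).Reachable x b) :
    T.dist a b = T.dist a x + T.dist x b := by
  obtain ⟨p, hp⟩ := (hc a b).exists_walk_length_eq_dist
  have hx : x ∈ p.support := by
    by_contra hxs
    have hedge : ∀ e ∈ p.edges, e ∉ ({s(x, y)} : Set (Sym2 ι)) := by
      intro e he hes
      rw [Set.mem_singleton_iff] at hes
      subst hes
      exact hxs (p.fst_mem_support_of_mem_edges he)
    exact hb (ha.trans ⟨p.toDeleteEdges {s(x, y)} hedge⟩)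
  refine le_antisymm (hc.dist_triangle) ?_
  have h1 : T.dist a x ≤ (p.takeUntil x hx).length := SimpleGraph.dist_le _
  have h2 : T.dist x b ≤ (p.dropUntil x hx).length := SimpleGraph.dist_le _
  have h3 : (p.takeUntil x hx).length + (p.dropUntil x hx).length = p.length := by
    have := congr_arg SimpleGraph.Walk.length (p.take_spec hx)
    rwa [SimpleGraph.Walk.length_append] at this
  omega

/-- Every vertex is reachable from `x` or from `y` after deleting edge `s(x,y)`. -/
lemma reach_or_aux {ι : Type*} (T : SimpleGraph ι) (hc : T.Connected) (x y v : ι) :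
    (T.deleteEdges {s(x, y)}).Reachable x v ∨ (T.deleteEdges {s(x, y)}).Reachable y v := by
  set T' := T.deleteEdges {s(x, y)} with hT'
  have step : ∀ {u w : ι}, T.Adj u w → (T'.Reachable x u ∨ T'.Reachable y u) →
      (T'.Reachable x w ∨ T'.Reachable y w) := by
    intro u w hadj hu
    by_cases he : s(u, w) = s(x, y)
    · rw [Sym2.eq_iff] at he
      rcases he with ⟨-, rfl⟩ | ⟨-, rfl⟩
      · exact Or.inr (SimpleGraph.Reachable.refl _)
      · exact Or.inl (SimpleGraph.Reachable.refl _)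
    · have hadj' : T'.Adj u w := by
        rw [hT', SimpleGraph.deleteEdges_adj]
        exact ⟨hadj, by simpa using he⟩
      exact hu.imp (fun h => h.trans hadj'.reachable) (fun h => h.trans hadj'.reachable)
  have main : ∀ (u w : ι) (p : T.Walk u w), (T'.Reachable x u ∨ T'.Reachable y u) →
      (T'.Reachable x w ∨ T'.Reachable y w) := by
    intro u w p
    induction p with
    | nil => exact id
    | cons h q ih => exact fun hu => ih (step h hu)
  obtain ⟨p⟩ := hc x v
  exact main x v p (Or.inl (SimpleGraph.Reachable.refl _))

/-- Let `T` be a tree, `L` its set of leaves, `k ≥ 1`, and `G` the leaf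
power on `L` (two leaves adjacent iff their distance in `T` is at most `k`). For any
edge `{x, y}` of `T`, letting `A` be the set of leaves on the `x`-side after deleting
the edge, the cut `(A, L \ A)` of `G` admits no induced matching of size 2: there are
no two disjoint crossing edges of `G` without the crossing diagonals. -/
theorem leaf_power_cut_mim_le_one {ι : Type*} [Fintype ι] [DecidableEq ι]
    (T : SimpleGraph ι) (htree : T.Connected ∧ T.IsAcyclic)
    (k : ℕ) (hk : 0 < k)
    (L : Set ι) (hL : L = {v | (T.neighborSet v).ncard = 1})
    (G : SimpleGraph ι)
    (hG : ∀ u v, G.Adj u v ↔ u ≠ v ∧ u ∈ L ∧ v ∈ L ∧ T.dist u v ≤ k)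
    (x y : ι) (hxy : T.Adj x y)
    (A : Set ι) (hA : A = {v ∈ L | (T.deleteEdges {s(x, y)}).Reachable x v}) :
    ¬ ∃ a₁ b₁ a₂ b₂ : ι,
      a₁ ∈ A ∧ a₂ ∈ A ∧ b₁ ∈ L \ A ∧ b₂ ∈ L \ A ∧
      a₁ ≠ a₂ ∧ b₁ ≠ b₂ ∧
      G.Adj a₁ b₁ ∧ G.Adj a₂ b₂ ∧ ¬ G.Adj a₁ b₂ ∧ ¬ G.Adj a₂ b₁ := by
  obtain ⟨hc, -⟩ := htree
  rintro ⟨a₁, b₁, a₂, b₂, ha₁, ha₂, hb₁, hb₂, -, -, h11, h22, h12, h21⟩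
  subst hA
  -- Unpack memberships
  obtain ⟨ha₁L, ha₁R⟩ := ha₁
  obtain ⟨ha₂L, ha₂R⟩ := ha₂
  have hb₁L : b₁ ∈ L := hb₁.1
  have hb₂L : b₂ ∈ L := hb₂.1
  have hb₁R : ¬ (T.deleteEdges {s(x, y)}).Reachable x b₁ := fun h => hb₁.2 ⟨hb₁L, h⟩
  have hb₂R : ¬ (T.deleteEdges {s(x, y)}).Reachable x b₂ := fun h => hb₂.2 ⟨hb₂L, h⟩
  have hb₁Y : (T.deleteEdges {s(x, y)}).Reachable y b₁ :=
    (reach_or_aux T hc x y b₁).resolve_left hb₁R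
  have hb₂Y : (T.deleteEdges {s(x, y)}).Reachable y b₂ :=
    (reach_or_aux T hc x y b₂).resolve_left hb₂R
  have hyx : ¬ (T.deleteEdges {s(x, y)}).Reachable y x := fun h =>
    hb₁R ((h.symm.trans hb₁Y))
  have hsym : ({s(y, x)} : Set (Sym2 ι)) = {s(x, y)} := by rw [Sym2.eq_swap]
  -- distance from x to the b's
  have hdxy : T.dist y x = 1 := SimpleGraph.dist_eq_one_iff_adj.mpr hxy.symm
  have hdxb : ∀ b : ι, (T.deleteEdges {s(x, y)}).Reachable y b →
      T.dist x b = T.dist y b + 1 := by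
    intro b hb
    have := dist_split_aux T hc y x b x (by rwa [hsym]) (by rwa [hsym])
    rw [show T.dist x b = T.dist b x from SimpleGraph.dist_comm, this,
      show T.dist b y = T.dist y b from SimpleGraph.dist_comm, hdxy]
  have key : ∀ a b : ι, (T.deleteEdges {s(x, y)}).Reachable x a →
      (T.deleteEdges {s(x, y)}).Reachable y b →
      ¬ (T.deleteEdges {s(x, y)}).Reachable x b →
      T.dist a b = T.dist a x + T.dist y b + 1 := by
    intro a b hra hrb hnrb
    rw [dist_split_aux T hc x y a b hra hnrb, hdxb b hrb]
    ring
  have e11 : T.dist a₁ b₁ = T.dist a₁ x + T.dist y b₁ + 1 := key _ _ ha₁R hb₁Y hb₁R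
  have e22 : T.dist a₂ b₂ = T.dist a₂ x + T.dist y b₂ + 1 := key _ _ ha₂R hb₂Y hb₂R
  have e12 : T.dist a₁ b₂ = T.dist a₁ x + T.dist y b₂ + 1 := key _ _ ha₁R hb₂Y hb₂R
  have e21 : T.dist a₂ b₁ = T.dist a₂ x + T.dist y b₁ + 1 := key _ _ ha₂R hb₁Y hb₁R
  have d11 : T.dist a₁ b₁ ≤ k := ((hG a₁ b₁).mp h11).2.2.2
  have d22 : T.dist a₂ b₂ ≤ k := ((hG a₂ b₂).mp h22).2.2.2
  have hne12 : a₁ ≠ b₂ := fun h => hb₂.2 (h ▸ ⟨ha₁L, ha₁R⟩)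
  have hne21 : a₂ ≠ b₁ := fun h => hb₁.2 (h ▸ ⟨ha₂L, ha₂R⟩)
  have d12 : ¬ T.dist a₁ b₂ ≤ k := fun h => h12 ((hG a₁ b₂).mpr ⟨hne12, ha₁L, hb₂L, h⟩)
  have d21 : ¬ T.dist a₂ b₁ ≤ k := fun h => h21 ((hG a₂ b₁).mpr ⟨hne21, ha₂L, hb₁L, h⟩)
  omega
end
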